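/- If limsup_{n→∞} |φ_{nn}|^{1/n} < 1, then limsup_{n→∞} |π_n|^{1/n} ≤ limsup_{n→∞} |φ_{nn}|^{1/n}. -/

import Mathlib

open scoped RealInnerProductSpace
open Filter
open scoped Topology

/-- The closed linear span `H_I` of `{X t : t ∈ I}` in a real Hilbert space. -/
noncomputable def hSpan {H : Type*} [NormedAddCommGroup H] [InnerProductSpace ℝ H]
    (X : ℤ → H) (I : Set ℤ) : Submodule ℝ H :=
  (Submodule.span ℝ (X '' I)).topologicalClosure

/-- The orthogonal projection `P_I v` of `v` onto the closed span `H_I`. -/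
noncomputable def projSpan {H : Type*} [NormedAddCommGroup H] [InnerProductSpace ℝ H]
    [CompleteSpace H] (X : ℤ → H) (I : Set ℤ) (v : H) : H :=
  haveI : CompleteSpace (hSpan X I) :=
    (Submodule.isClosed_topologicalClosure _).completeSpace_coe
  ((hSpan X I).orthogonalProjectionOnto v : H)

/-- The innovation `ε_t = X_t - ∑_{i ≥ 1} π_i X_{t-i}` of the AR(∞) representation. -/
noncomputable def arEps {H : Type*} [NormedAddCommGroup H] [InnerProductSpace ℝ H]
    (X : ℤ → H) (π : ℕ → ℝ) (t : ℤ) : H :=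
  X t - ∑' i : ℕ, π (i + 1) • X (t - (i + 1 : ℕ))

section helpers
set_option linter.unusedSectionVars false

variable {H : Type*} [NormedAddCommGroup H] [InnerProductSpace ℝ H] [CompleteSpace H]

lemma hSpan_complete (X : ℤ → H) (I : Set ℤ) : CompleteSpace (hSpan X I) :=
  (Submodule.isClosed_topologicalClosure _).completeSpace_coe

lemma X_mem_hSpan (X : ℤ → H) {I : Set ℤ} {s : ℤ} (hs : s ∈ I) : X s ∈ hSpan X I :=
  Submodule.le_topologicalClosure _ (Submodule.subset_span ⟨s, hs, rfl⟩)

lemma projSpan_inner_eq_zero (X : ℤ → H) (I : Set ℤ) (v w : H) (hw : w ∈ hSpan X I) :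
    ⟪v - projSpan X I v, w⟫ = 0 := by
  haveI := hSpan_complete X I
  exact (hSpan X I).starProjection_inner_eq_zero v w hw

lemma projSpan_mem (X : ℤ → H) (I : Set ℤ) (v : H) : projSpan X I v ∈ hSpan X I := by
  haveI := hSpan_complete X I
  exact ((hSpan X I).orthogonalProjectionOnto v).2

lemma projSpan_norm_le (X : ℤ → H) (I : Set ℤ) (v : H) : ‖projSpan X I v‖ ≤ ‖v‖ := by
  haveI := hSpan_complete X I
  calc ‖projSpan X I v‖ = ‖(hSpan X I).orthogonalProjectionOnto v‖ := rfl
    _ ≤ ‖((hSpan X I).orthogonalProjectionOnto : H →L[ℝ] hSpan X I)‖ * ‖v‖ :=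
        ((hSpan X I).orthogonalProjectionOnto).le_opNorm v
    _ ≤ 1 * ‖v‖ := by
        exact mul_le_mul_of_nonneg_right (Submodule.orthogonalProjectionOnto_norm_le _) (norm_nonneg v)
    _ = ‖v‖ := one_mul _

lemma mem_hSpan_orthogonal (X : ℤ → H) (I : Set ℤ) (w : H)
    (hw : ∀ s ∈ I, ⟪X s, w⟫ = 0) : w ∈ (hSpan X I)ᗮ := by
  have h1 : w ∈ (Submodule.span ℝ (X '' I))ᗮ := by
    rw [Submodule.mem_orthogonal]
    intro u hu
    induction hu using Submodule.span_induction with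
    | mem x hx => obtain ⟨s, hs, rfl⟩ := hx; exact hw s hs
    | zero => simp
    | add x y _ _ hx hy => rw [inner_add_left, hx, hy, add_zero]
    | smul a x _ hx => rw [inner_smul_left, hx, mul_zero]
  have : (hSpan X I)ᗮ = (Submodule.span ℝ (X '' I))ᗮ := by
    rw [hSpan, ← Submodule.orthogonal_orthogonal_eq_closure,
      Submodule.triorthogonal_eq_orthogonal]
  rw [this]; exact h1

/-- Expansion of an inner product of combinations of the `X`'s in terms of `γ`. -/
lemma inner_comb (X : ℤ → H) (γ : ℤ → ℝ) (hstat : ∀ s t : ℤ, ⟪X s, X t⟫ = γ (t - s))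
    {ι : Type*} (F G : Finset ι) (c d : ι → ℝ) (e g : ι → ℤ) :
    ⟪∑ i ∈ F, c i • X (e i), ∑ j ∈ G, d j • X (g j)⟫
      = ∑ i ∈ F, ∑ j ∈ G, c i * (d j * γ (g j - e i)) := by
  rw [sum_inner]
  refine Finset.sum_congr rfl fun i _ => ?_
  rw [real_inner_smul_left, inner_sum, Finset.mul_sum]
  refine Finset.sum_congr rfl fun j _ => ?_
  rw [real_inner_smul_right, hstat]

lemma norm_shift (X : ℤ → H) (γ : ℤ → ℝ) (hstat : ∀ s t : ℤ, ⟪X s, X t⟫ = γ (t - s))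
    {ι : Type*} (F : Finset ι) (c : ι → ℝ) (e : ι → ℤ) (t t' : ℤ) :
    ‖∑ i ∈ F, c i • X (e i + t)‖ = ‖∑ i ∈ F, c i • X (e i + t')‖ := by
  have key : ∀ u : ℤ, ‖∑ i ∈ F, c i • X (e i + u)‖ ^ 2
      = ∑ i ∈ F, ∑ j ∈ F, c i * (c j * γ (e j - e i)) := by
    intro u
    rw [← real_inner_self_eq_norm_sq, inner_comb X γ hstat]
    refine Finset.sum_congr rfl fun i _ => Finset.sum_congr rfl fun j _ => ?_
    congr 2
    ring
  have h2 : ‖∑ i ∈ F, c i • X (e i + t)‖ ^ 2 = ‖∑ i ∈ F, c i • X (e i + t')‖ ^ 2 := by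
    rw [key, key]
  have := congrArg Real.sqrt h2
  rwa [Real.sqrt_sq (norm_nonneg _), Real.sqrt_sq (norm_nonneg _)] at this

lemma inner_err (X : ℤ → H) (γ : ℤ → ℝ) (hstat : ∀ s t : ℤ, ⟪X s, X t⟫ = γ (t - s))
    {ι : Type*} (F : Finset ι) (c : ι → ℝ) (q : ι → ℤ) (p z : ℤ) :
    ⟪X p - ∑ i ∈ F, c i • X (q i), X z⟫ = γ (z - p) - ∑ i ∈ F, c i * γ (z - q i) := by
  rw [inner_sub_left, sum_inner, hstat]
  congr 1
  refine Finset.sum_congr rfl fun i _ => ?_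
  rw [real_inner_smul_left, hstat]

lemma coeff_bound (X : ℤ → H) (γ : ℤ → ℝ) (hstat : ∀ s t : ℤ, ⟪X s, X t⟫ = γ (t - s))
    (Y : H) (hY0 : ⟪X 0, Y⟫ = ‖Y‖ ^ 2) (hYs : ∀ s : ℤ, s ≠ 0 → ⟪X s, Y⟫ = 0)
    {ι : Type*} (F : Finset ι) (c : ι → ℝ) (e : ι → ℤ)
    (he : ∀ i ∈ F, ∀ j ∈ F, e i = e j → i = j) (n : ι) (hn : n ∈ F) :
    |c n| * ‖Y‖ ^ 2 ≤ ‖∑ i ∈ F, c i • X (e i)‖ * ‖Y‖ := by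
  set w := ∑ i ∈ F, c i • X (e i + -(e n)) with hw
  have h1 : ⟪w, Y⟫ = c n * ‖Y‖ ^ 2 := by
    rw [hw, sum_inner]
    rw [Finset.sum_eq_single n]
    · rw [real_inner_smul_left]
      congr 1
      rw [show e n + -(e n) = 0 by ring, hY0]
    · intro i hi hne
      rw [real_inner_smul_left, hYs _ (fun h => hne (he i hi n hn (by linarith [h] <;> omega))), mul_zero]
    · intro h; exact absurd hn h
  have h2 : |⟪w, Y⟫| ≤ ‖w‖ * ‖Y‖ := abs_real_inner_le_norm w Y
  have h3 : ‖w‖ = ‖∑ i ∈ F, c i • X (e i)‖ := by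
    rw [hw]
    have := norm_shift X γ hstat F c e (-(e n)) 0
    simpa using this
  rw [h1] at h2
  rw [abs_mul, abs_of_nonneg (by positivity : (0:ℝ) ≤ ‖Y‖ ^ 2)] at h2
  rw [← h3]
  exact h2
end helpers

set_option maxHeartbeats 1000000 in
/-- If `limsup |φ_{nn}|^{1/n} < 1`, then `limsup |π_n|^{1/n} ≤ limsup |φ_{nn}|^{1/n}`. -/
theorem ar_decay_rate_le_pacf_decay_rate
    {H : Type*} [NormedAddCommGroup H] [InnerProductSpace ℝ H] [CompleteSpace H]
    (X : ℤ → H) (γ : ℤ → ℝ) (π : ℕ → ℝ) (σε2 : ℝ)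
    (hstat : ∀ s t : ℤ, ⟪X s, X t⟫ = γ (t - s))
    (hπ : Summable fun i : ℕ => |π i|)
    (heps_orth : ∀ t s : ℤ, s ≤ t - 1 → ⟪arEps X π t, X s⟫ = 0)
    (heps_var : ∀ t : ℤ, ‖arEps X π t‖ ^ 2 = σε2)
    (hσε : 0 < σε2)
    (hmin : 0 < ‖X 0 - projSpan X (Set.Iic (-1) ∪ Set.Ici 1) (X 0)‖ ^ 2)
    (φ : ℕ → ℕ → ℝ)
    (hφ : ∀ k : ℕ, 1 ≤ k → ∀ t : ℤ,
      projSpan X (Set.Icc (t - k) (t - 1)) (X t) = ∑ j ∈ Finset.Icc 1 k, φ k j • X (t - j))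
    (hlt : Filter.limsup (fun n : ℕ => |φ n n| ^ (1 / (n : ℝ))) Filter.atTop < 1) :
    Filter.limsup (fun n : ℕ => |π n| ^ (1 / (n : ℝ))) Filter.atTop
      ≤ Filter.limsup (fun n : ℕ => |φ n n| ^ (1 / (n : ℝ))) Filter.atTop := by
  classical
  set Y : H := X 0 - projSpan X (Set.Iic (-1) ∪ Set.Ici 1) (X 0) with hYdef
  have hσ : 0 < ‖Y‖ := by
    by_contra h
    push_neg at h
    have : ‖Y‖ = 0 := le_antisymm h (norm_nonneg _)
    rw [hYdef] at this
    rw [this] at hmin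
    norm_num at hmin
  have hYs : ∀ s : ℤ, s ≠ 0 → ⟪X s, Y⟫ = 0 := by
    intro s hs
    rw [real_inner_comm, hYdef]
    refine projSpan_inner_eq_zero X _ (X 0) (X s) (X_mem_hSpan X ?_)
    rcases lt_or_gt_of_ne hs with h | h
    · exact Or.inl (by simpa [Set.mem_Iic] using by omega)
    · exact Or.inr (by simpa [Set.mem_Ici] using by omega)
  have hY0 : ⟪X 0, Y⟫ = ‖Y‖ ^ 2 := by
    have h1 : ⟪projSpan X (Set.Iic (-1) ∪ Set.Ici 1) (X 0), Y⟫ = 0 := by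
      rw [real_inner_comm, hYdef]
      exact projSpan_inner_eq_zero X _ (X 0) _ (projSpan_mem X _ (X 0))
    have h2 : X 0 = Y + projSpan X (Set.Iic (-1) ∪ Set.Ici 1) (X 0) := by
      rw [hYdef]; abel
    rw [show ⟪X 0, Y⟫ = ⟪Y + projSpan X (Set.Iic (-1) ∪ Set.Ici 1) (X 0), Y⟫ from by rw [← h2]]
    rw [inner_add_left, real_inner_comm _ Y, h1, add_zero, real_inner_self_eq_norm_sq]
  -- specialized coefficient bound
  have cB : ∀ (F : Finset ℕ) (c : ℕ → ℝ) (e : ℕ → ℤ),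
      (∀ i ∈ F, ∀ j ∈ F, e i = e j → i = j) → ∀ n ∈ F,
      |c n| * ‖Y‖ ≤ ‖∑ i ∈ F, c i • X (e i)‖ := by
    intro F c e he n hn
    have h := coeff_bound X γ hstat Y hY0 hYs F c e he n hn
    have h2 : |c n| * ‖Y‖ * ‖Y‖ ≤ ‖∑ i ∈ F, c i • X (e i)‖ * ‖Y‖ := by
      calc |c n| * ‖Y‖ * ‖Y‖ = |c n| * ‖Y‖ ^ 2 := by ring
        _ ≤ _ := h
    exact le_of_mul_le_mul_right h2 hσ
  have heven : ∀ h : ℤ, γ (-h) = γ h := by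
    intro h
    have h1 := hstat 0 h
    have h2 := hstat h 0
    rw [real_inner_comm] at h1
    rw [h1] at h2
    simpa using h2.symm
  have hγ0 : ∀ p : ℤ, ‖X p‖ = Real.sqrt (γ 0) := by
    intro p
    have h1 : ⟪X p, X p⟫ = γ 0 := by rw [hstat]; norm_num
    rw [← h1, real_inner_self_eq_norm_sq]
    rw [Real.sqrt_sq (norm_nonneg _)]
  -- scalar Yule-Walker equations
  have Esc : ∀ k : ℕ, 1 ≤ k → ∀ z : ℤ, -k ≤ z → z ≤ -1 →
      γ z = ∑ j ∈ Finset.Icc 1 k, φ k j * γ (z + j) := by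
    intro k hk z hz1 hz2
    have hmem : X z ∈ hSpan X (Set.Icc ((0:ℤ) - k) (0 - 1)) :=
      X_mem_hSpan X (by simp [Set.mem_Icc]; omega)
    have h := projSpan_inner_eq_zero X (Set.Icc ((0:ℤ) - k) (0 - 1)) (X 0) (X z) hmem
    rw [hφ k hk 0] at h
    rw [inner_err X γ hstat (Finset.Icc 1 k) (φ k) (fun j => (0:ℤ) - (j:ℕ)) 0 z] at h
    have h2 : γ (z - 0) = ∑ j ∈ Finset.Icc 1 k, φ k j * γ (z - (0 - (j:ℕ))) := by
      linarith [h]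
    rw [show z - 0 = z from by ring] at h2
    rw [h2]
    refine Finset.sum_congr rfl fun j _ => ?_
    congr 2
    ring
  -- uniform bound on the predictor coefficients
  have hφM : ∀ k : ℕ, 1 ≤ k → ∀ j ∈ Finset.Icc 1 k, |φ k j| * ‖Y‖ ≤ Real.sqrt (γ 0) := by
    intro k hk j hj
    have he : ∀ i ∈ Finset.Icc 1 k, ∀ i' ∈ Finset.Icc 1 k,
        ((0:ℤ) - (i:ℕ)) = ((0:ℤ) - (i':ℕ)) → i = i' := by intro i _ i' _ h; omega
    have h := cB (Finset.Icc 1 k) (φ k) (fun j => (0:ℤ) - (j:ℕ)) he j hj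
    refine h.trans ?_
    rw [← hφ k hk 0]
    exact (projSpan_norm_le X _ (X 0)).trans (le_of_eq (hγ0 0))
  -- Durbin-Levinson recursion
  have REC : ∀ k : ℕ, 1 ≤ k → ∀ m ∈ Finset.Icc 1 k,
      φ (k+1) m = φ k m - φ (k+1) (k+1) * φ k (k+1-m) := by
    intro k hk
    set D : ℝ := γ 0 - ∑ j ∈ Finset.Icc 1 k, φ k j * γ (j:ℕ) with hDdef
    set p : ℤ := -((k:ℤ) + 1) with hpdef
    set b : H := X p - ∑ j ∈ Finset.Icc 1 k, φ k j • X (p + j) with hbdef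
    -- backward prediction error orthogonality
    have orthB : ∀ z : ℤ, -k ≤ z → z ≤ -1 → ⟪b, X z⟫ = 0 := by
      intro z hz1 hz2
      rw [hbdef, inner_err X γ hstat (Finset.Icc 1 k) (φ k) (fun j => p + (j:ℕ)) p z]
      have hE := Esc k hk (-(z - p)) (by omega) (by omega)
      have h1 : γ (-(z-p)) = γ (z - p) := heven _
      have h2 : ∑ j ∈ Finset.Icc 1 k, φ k j * γ (-(z-p) + j)
          = ∑ j ∈ Finset.Icc 1 k, φ k j * γ (z - (p + j)) := by
        refine Finset.sum_congr rfl fun j _ => ?_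
        rw [show -(z-p) + (j:ℤ) = -(z - (p + j)) from by ring, heven]
      rw [h1, h2] at hE
      rw [← hE]
      ring
    -- inner product of b with itself
    have hbb : ⟪b, b⟫ = D := by
      have hexp : ⟪b, b⟫ = ⟪b, X p⟫ - ∑ j ∈ Finset.Icc 1 k, φ k j * ⟪b, X (p + j)⟫ := by
        rw [show ⟪b, b⟫ = ⟪b, X p - ∑ j ∈ Finset.Icc 1 k, φ k j • X (p + j)⟫ from by rw [← hbdef]]
        rw [inner_sub_right, inner_sum]
        congr 1
        exact Finset.sum_congr rfl fun j _ => by rw [real_inner_smul_right]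
      have hz : ∀ j ∈ Finset.Icc 1 k, ⟪b, X (p + j)⟫ = 0 := by
        intro j hj
        simp only [Finset.mem_Icc] at hj
        exact orthB (p + j) (by omega) (by omega)
      have hbp : ⟪b, X p⟫ = D := by
        rw [hbdef, inner_err X γ hstat (Finset.Icc 1 k) (φ k) (fun j => p + (j:ℕ)) p p]
        rw [hDdef]
        rw [show p - p = (0:ℤ) from by ring]
        congr 1
        refine Finset.sum_congr rfl fun j _ => ?_
        rw [show p - (p + (j:ℕ)) = -(j:ℤ) from by ring, heven]
      rw [hexp, hbp, Finset.sum_congr rfl (fun j hj => by rw [hz j hj, mul_zero]),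
        Finset.sum_const_zero, sub_zero]
    -- D is positive
    have hDge : ‖Y‖ ^ 2 ≤ D := by
      set c' : ℕ → ℝ := fun i => if i = 0 then 1 else -φ k i with hc'def
      have hsum : ∑ i ∈ Finset.Icc 0 k, c' i • X (p + i) = b := by
        have hins : Finset.Icc 0 k = insert 0 (Finset.Icc 1 k) := by
          ext i; simp [Finset.mem_Icc, Finset.mem_insert]; omega
        rw [hins, Finset.sum_insert (by simp)]
        rw [hbdef]
        have : ∀ i ∈ Finset.Icc 1 k, c' i • X (p + i) = -(φ k i • X (p + i)) := by
          intro i hi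
          simp only [Finset.mem_Icc] at hi
          rw [hc'def]
          simp only [if_neg (by omega : i ≠ 0)]
          rw [neg_smul]
        rw [Finset.sum_congr rfl this, Finset.sum_neg_distrib]
        simp only [hc'def, if_pos rfl, one_smul]
        push_cast
        rw [sub_eq_add_neg, add_zero]
      have he : ∀ i ∈ Finset.Icc 0 k, ∀ i' ∈ Finset.Icc 0 k,
          (p + (i:ℕ)) = (p + (i':ℕ)) → i = i' := by intro i _ i' _ h; omega
      have h := cB (Finset.Icc 0 k) c' (fun i => p + (i:ℕ)) he 0 (by simp)
      rw [hsum] at h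
      simp only [hc'def, if_pos rfl, abs_one, one_mul] at h
      calc ‖Y‖ ^ 2 ≤ ‖b‖ ^ 2 := by
            apply pow_le_pow_left₀ (norm_nonneg Y) h
        _ = ⟪b, b⟫ := (real_inner_self_eq_norm_sq b).symm
        _ = D := hbb
    have hD0 : 0 < D := lt_of_lt_of_le (by positivity) hDge
    set A : ℝ := (γ ((k:ℤ)+1) - ∑ m ∈ Finset.Icc 1 k, φ k m * γ ((k:ℤ)+1 - m)) / D with hAdef
    set c : ℕ → ℝ := fun m => if m = k+1 then A else φ k m - A * φ k (k+1-m) with hcdef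
    -- the candidate coefficients satisfy the order-(k+1) Yule-Walker equations
    have Claim : ∀ z : ℤ, -((k:ℤ)+1) ≤ z → z ≤ -1 →
        γ z = ∑ m ∈ Finset.Icc 1 (k+1), c m * γ (z + m) := by
      intro z hz1 hz2
      rw [Finset.sum_Icc_succ_top (by omega : 1 ≤ k + 1)]
      have hctop : c (k+1) = A := by rw [hcdef]; simp
      have hcmid : ∀ m ∈ Finset.Icc 1 k, c m * γ (z + m)
          = φ k m * γ (z + m) - A * (φ k (k+1-m) * γ (z + m)) := by
        intro m hm
        simp only [Finset.mem_Icc] at hm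
        rw [hcdef]
        simp only [if_neg (by omega : m ≠ k + 1)]
        ring
      rw [hctop, Finset.sum_congr rfl hcmid, Finset.sum_sub_distrib, ← Finset.mul_sum]
      -- reindex the reversed sum
      have hrev : ∑ m ∈ Finset.Icc 1 k, φ k (k+1-m) * γ (z + m)
          = ∑ j ∈ Finset.Icc 1 k, φ k j * γ (z + (k:ℤ) + 1 - j) := by
        refine Finset.sum_nbij' (fun m => k + 1 - m) (fun j => k + 1 - j) ?_ ?_ ?_ ?_ ?_
        · intro m hm; simp only [Finset.mem_Icc] at *; omega
        · intro j hj; simp only [Finset.mem_Icc] at *; omega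
        · intro m hm; simp only [Finset.mem_Icc] at hm; show k + 1 - (k + 1 - m) = m; omega
        · intro j hj; simp only [Finset.mem_Icc] at hj; show k + 1 - (k + 1 - j) = j; omega
        · intro m hm
          simp only [Finset.mem_Icc] at hm
          show φ k (k+1-m) * γ (z + (m:ℕ)) = φ k (k+1-m) * γ (z + (k:ℤ) + 1 - ((k+1-m : ℕ) : ℤ))
          congr 2
          omega
      rw [hrev]
      rcases eq_or_lt_of_le hz1 with hzeq | hzlt
      · -- z = -(k+1)
        have hAD : A * D = γ ((k:ℤ)+1) - ∑ m ∈ Finset.Icc 1 k, φ k m * γ ((k:ℤ)+1 - m) := by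
          rw [hAdef]; field_simp
        have h1 : ∑ m ∈ Finset.Icc 1 k, φ k m * γ (z + m)
            = ∑ m ∈ Finset.Icc 1 k, φ k m * γ ((k:ℤ)+1 - m) := by
          refine Finset.sum_congr rfl fun m _ => ?_
          rw [show z + (m:ℕ) = -(((k:ℤ)+1) - m) from by omega, heven]
        have h2 : ∑ j ∈ Finset.Icc 1 k, φ k j * γ (z + (k:ℤ) + 1 - j)
            = ∑ j ∈ Finset.Icc 1 k, φ k j * γ (j:ℕ) := by
          refine Finset.sum_congr rfl fun j _ => ?_
          rw [show z + (k:ℤ) + 1 - (j:ℕ) = -(j:ℤ) from by omega, heven]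
        have h3 : γ (z + ((k:ℕ)+1:ℕ)) = γ 0 := by
          congr 1; push_cast; omega
        have h4 : γ z = γ ((k:ℤ)+1) := by
          rw [show z = -((k:ℤ)+1) from by omega, heven]
        rw [h1, h2, h3, h4]
        have : A * (γ 0 - ∑ j ∈ Finset.Icc 1 k, φ k j * γ (j:ℕ)) = A * D := by rw [hDdef]
        nlinarith [hAD, this]
      · -- -(k) ≤ z ≤ -1
        have hE1 := Esc k hk z (by omega) hz2
        have hE2 := Esc k hk (-(z + (k:ℤ) + 1)) (by omega) (by omega)
        have h1 : γ (-(z + (k:ℤ) + 1)) = γ (z + (k:ℤ) + 1) := heven _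
        have h2 : ∑ j ∈ Finset.Icc 1 k, φ k j * γ (-(z + (k:ℤ) + 1) + j)
            = ∑ j ∈ Finset.Icc 1 k, φ k j * γ (z + (k:ℤ) + 1 - j) := by
          refine Finset.sum_congr rfl fun j _ => ?_
          rw [show -(z + (k:ℤ) + 1) + (j:ℕ) = -(z + (k:ℤ) + 1 - j) from by ring, heven]
        rw [h1, h2] at hE2
        have h3 : γ (z + ((k:ℕ)+1:ℕ)) = γ (z + (k:ℤ) + 1) := by
          congr 1; push_cast; ring
        rw [h3, ← hE1, ← hE2]
        ring
    -- uniqueness: the difference of coefficient vectors vanishes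
    have hdzero : ∀ m ∈ Finset.Icc 1 (k+1), φ (k+1) m - c m = 0 := by
      set d : ℕ → ℝ := fun m => φ (k+1) m - c m with hddef
      have hdz : ∀ z : ℤ, -((k:ℤ)+1) ≤ z → z ≤ -1 →
          ∑ m ∈ Finset.Icc 1 (k+1), d m * γ (z + m) = 0 := by
        intro z hz1 hz2
        have hE := Esc (k+1) (by omega) z (by push_cast; omega) hz2
        have hC := Claim z hz1 hz2
        have : ∀ m ∈ Finset.Icc 1 (k+1), d m * γ (z + m)
            = φ (k+1) m * γ (z + m) - c m * γ (z + m) := by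
          intro m _; rw [hddef]; ring
        rw [Finset.sum_congr rfl this, Finset.sum_sub_distrib, ← hE, ← hC, sub_self]
      set u : H := ∑ m ∈ Finset.Icc 1 (k+1), d m • X ((0:ℤ) - m) with hudef
      have huu : ⟪u, u⟫ = 0 := by
        rw [hudef, inner_comb X γ hstat]
        rw [Finset.sum_eq_zero]
        intro m hm
        simp only [Finset.mem_Icc] at hm
        have : ∑ j ∈ Finset.Icc 1 (k+1), d m * (d j * γ ((0:ℤ) - j - ((0:ℤ) - m)))
            = d m * ∑ j ∈ Finset.Icc 1 (k+1), d j * γ (-(m:ℤ) + j) := by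
          rw [Finset.mul_sum]
          refine Finset.sum_congr rfl fun j _ => ?_
          rw [show (0:ℤ) - (j:ℕ) - ((0:ℤ) - (m:ℕ)) = -(-(m:ℤ) + j) from by ring, heven]
        rw [this, hdz (-(m:ℤ)) (by omega) (by omega), mul_zero]
      have hu0 : u = 0 := by
        rwa [inner_self_eq_zero] at huu
      intro m hm
      have he : ∀ i ∈ Finset.Icc 1 (k+1), ∀ i' ∈ Finset.Icc 1 (k+1),
          ((0:ℤ) - (i:ℕ)) = ((0:ℤ) - (i':ℕ)) → i = i' := by intro i _ i' _ h; omega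
      have h := cB (Finset.Icc 1 (k+1)) d (fun i => (0:ℤ) - (i:ℕ)) he m hm
      rw [← hudef, hu0, norm_zero] at h
      have habs : |d m| = 0 := by
        by_contra hne
        have : 0 < |d m| := lt_of_le_of_ne (abs_nonneg _) (Ne.symm hne)
        nlinarith
      have := abs_eq_zero.mp habs
      rw [hddef] at this
      exact this
    -- conclude the recursion
    have hAtop : φ (k+1) (k+1) = A := by
      have := hdzero (k+1) (by simp)
      rw [sub_eq_zero] at this
      rw [this, hcdef]; simp
    intro m hm
    have h1 := hdzero m (by simp only [Finset.mem_Icc] at *; constructor <;> omega)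
    rw [sub_eq_zero] at h1
    simp only [Finset.mem_Icc] at hm
    have h2 : c m = φ k m - A * φ k (k+1-m) := by
      simp only [hcdef]
      rw [if_neg (by omega : m ≠ k+1)]
    rw [h1, h2, hAtop]
  -- the uniform bound constant
  set M : ℝ := Real.sqrt (γ 0) / ‖Y‖ with hMdef
  have hM0 : 0 ≤ M := by positivity
  have hMbd : ∀ k n : ℕ, 1 ≤ n → n ≤ k → |φ k n| ≤ M := by
    intro k n h1 h2
    rw [hMdef, le_div_iff₀ hσ]
    exact hφM k (h1.trans h2) n (by simp only [Finset.mem_Icc]; omega)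
  -- main quantitative step, for any ρ as in the hypothesis
  have key : ∀ ρ : ℝ, 0 < ρ → ρ < 1 →
      (∀ᶠ n in atTop, |φ n n| ^ (1 / (n:ℝ)) < ρ) →
      Filter.limsup (fun n : ℕ => |π n| ^ (1 / (n : ℝ))) Filter.atTop ≤ ρ := by
    intro ρ hρ0 hρ1 hev
    obtain ⟨N, hN⟩ := eventually_atTop.mp hev
    have hρn : ∀ n : ℕ, N ≤ n → |φ n n| ≤ ρ ^ n := by
      intro n hn
      have h := hN n hn
      rcases Nat.eq_zero_or_pos n with h0 | h1
      · exfalso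
        rw [h0] at h
        norm_num [Real.rpow_zero] at h
        linarith
      · have hb : (0:ℝ) ≤ |φ n n| ^ (1/(n:ℝ)) := Real.rpow_nonneg (abs_nonneg _) _
        have hcal : |φ n n| = (|φ n n| ^ (1/(n:ℝ))) ^ (n:ℕ) := by
          rw [← Real.rpow_natCast (|φ n n| ^ (1/(n:ℝ))) n, ← Real.rpow_mul (abs_nonneg _)]
          rw [show (1/(n:ℝ)) * (n:ℕ) = 1 from by
            field_simp]
          rw [Real.rpow_one]
        rw [hcal]
        exact pow_le_pow_left₀ hb h.le n
    -- telescoping bound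
    have tele : ∀ n : ℕ, N ≤ n → 1 ≤ n → ∀ K : ℕ, n ≤ K →
        |φ K n| ≤ ρ ^ n + M * ∑ k ∈ Finset.Ico n K, ρ ^ (k+1) := by
      intro n hNn h1n K hK
      induction K, hK using Nat.le_induction with
      | base => simpa using hρn n hNn
      | succ K hK ih =>
        have hrec := REC K (h1n.trans hK) n (by simp only [Finset.mem_Icc]; omega)
        have habs : |φ (K+1) n| ≤ |φ K n| + |φ (K+1) (K+1)| * |φ K (K+1-n)| := by
          rw [hrec, sub_eq_add_neg]
          refine (abs_add_le _ _).trans ?_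
          rw [abs_neg, abs_mul]
        have h2 : |φ (K+1) (K+1)| * |φ K (K+1-n)| ≤ ρ ^ (K+1) * M := by
          refine mul_le_mul (hρn (K+1) (by omega)) (hMbd K (K+1-n) (by omega) (by omega))
            (abs_nonneg _) (pow_nonneg hρ0.le _)
        rw [Finset.sum_Ico_succ_top hK]
        calc |φ (K+1) n| ≤ |φ K n| + |φ (K+1) (K+1)| * |φ K (K+1-n)| := habs
          _ ≤ (ρ ^ n + M * ∑ k ∈ Finset.Ico n K, ρ ^ (k+1)) + ρ ^ (K+1) * M := by
              exact add_le_add ih h2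
          _ = ρ ^ n + M * (∑ k ∈ Finset.Ico n K, ρ ^ (k+1) + ρ ^ (K+1)) := by ring
    -- geometric sum bound
    have hgeo : ∀ n K : ℕ, n ≤ K → ∑ k ∈ Finset.Ico n K, ρ ^ (k+1) ≤ ρ ^ (n+1) / (1 - ρ) := by
      intro n K hnK
      have h2 : (0:ℝ) < 1 - ρ := by linarith
      have hsum : ∑ k ∈ Finset.Ico n K, ρ ^ (k+1)
          = (∑ k ∈ Finset.Ico n K, ρ ^ k) * ρ := by
        rw [Finset.sum_mul]
        exact Finset.sum_congr rfl fun k _ => (pow_succ ρ k)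
      rw [hsum, geom_sum_Ico (by intro h; rw [h] at hρ1; linarith) hnK]
      have h3 : (ρ ^ K - ρ ^ n) / (ρ - 1) = (ρ ^ n - ρ ^ K) / (1 - ρ) := by
        rw [div_eq_div_iff (by linarith) (by linarith)]
        ring
      rw [h3]
      rw [div_mul_eq_mul_div, pow_succ, div_le_div_iff₀ h2 h2]
      have h4 : (0:ℝ) ≤ ρ ^ K := pow_nonneg hρ0.le _
      have h5 : (0:ℝ) ≤ ρ ^ n := pow_nonneg hρ0.le _
      nlinarith [mul_nonneg (mul_nonneg h4 hρ0.le) h2.le]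
    set C : ℝ := 1 + M * (ρ / (1 - ρ)) with hCdef
    have hC1 : 1 ≤ C := by
      rw [hCdef]
      have : 0 ≤ M * (ρ / (1 - ρ)) := by
        apply mul_nonneg hM0
        apply div_nonneg hρ0.le
        linarith
      linarith
    have bound1 : ∀ n : ℕ, N ≤ n → 1 ≤ n → ∀ K : ℕ, n ≤ K → |φ K n| ≤ C * ρ ^ n := by
      intro n hNn h1n K hK
      calc |φ K n| ≤ ρ ^ n + M * ∑ k ∈ Finset.Ico n K, ρ ^ (k+1) := tele n hNn h1n K hK
        _ ≤ ρ ^ n + M * (ρ ^ (n+1) / (1 - ρ)) := by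
            exact add_le_add (le_refl _) (mul_le_mul_of_nonneg_left (hgeo n K hK) hM0)
        _ = C * ρ ^ n := by rw [hCdef]; ring
    -- element-level recursion for the predictor
    have SREC : ∀ (t : ℤ) (K : ℕ), 1 ≤ K →
        (∑ m ∈ Finset.Icc 1 (K+1), φ (K+1) m • X (t - (m:ℕ)))
          = (∑ m ∈ Finset.Icc 1 K, φ K m • X (t - (m:ℕ)))
            + φ (K+1) (K+1) • (X (t - ((K:ℤ)+1))
              - ∑ j ∈ Finset.Icc 1 K, φ K j • X (t - ((K:ℤ)+1) + j)) := by
      intro t K hK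
      rw [Finset.sum_Icc_succ_top (by omega : 1 ≤ K + 1)]
      have h1 : ∀ m ∈ Finset.Icc 1 K, φ (K+1) m • X (t - (m:ℕ))
          = φ K m • X (t - (m:ℕ)) - φ (K+1) (K+1) • (φ K (K+1-m) • X (t - (m:ℕ))) := by
        intro m hm
        rw [REC K hK m hm, sub_smul, mul_smul]
      rw [Finset.sum_congr rfl h1, Finset.sum_sub_distrib, ← Finset.smul_sum]
      have h2 : ∑ m ∈ Finset.Icc 1 K, φ K (K+1-m) • X (t - (m:ℕ))
          = ∑ j ∈ Finset.Icc 1 K, φ K j • X (t - ((K:ℤ)+1) + j) := by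
        refine Finset.sum_nbij' (fun m => K + 1 - m) (fun j => K + 1 - j) ?_ ?_ ?_ ?_ ?_
        · intro m hm; simp only [Finset.mem_Icc] at *; omega
        · intro j hj; simp only [Finset.mem_Icc] at *; omega
        · intro m hm; simp only [Finset.mem_Icc] at hm; show K + 1 - (K + 1 - m) = m; omega
        · intro j hj; simp only [Finset.mem_Icc] at hj; show K + 1 - (K + 1 - j) = j; omega
        · intro m hm
          simp only [Finset.mem_Icc] at hm
          show φ K (K+1-m) • X (t - (m:ℕ))
            = φ K (K+1-m) • X (t - ((K:ℤ)+1) + ((K+1-m : ℕ) : ℤ))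
          congr 2
          omega
      rw [h2]
      rw [show t - ((K+1:ℕ):ℤ) = t - ((K:ℤ)+1) from by push_cast; ring, smul_sub]
      abel
    -- identification of the AR coefficients as limits
    have hlim : ∀ n : ℕ, 1 ≤ n → Tendsto (fun K => φ K n) atTop (𝓝 (π n)) := by
      intro n h1n
      set S : ℕ → H := fun K => ∑ m ∈ Finset.Icc 1 K, φ K m • X ((n:ℤ) - (m:ℕ)) with hSdef
      set fK : ℕ → H := fun K => X (n:ℤ) - S K with hfKdef
      set bbf : ℕ → H := fun K => X ((n:ℤ) - ((K:ℤ)+1))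
          - ∑ j ∈ Finset.Icc 1 K, φ K j • X ((n:ℤ) - ((K:ℤ)+1) + j) with hbbdef
      have hfd : ∀ K, 1 ≤ K → fK (K+1) - fK K = -(φ (K+1) (K+1) • bbf K) := by
        intro K hK
        simp only [hfKdef, hSdef, hbbdef]
        rw [SREC (n:ℤ) K hK]
        abel
      have hbbnorm : ∀ K : ℕ, ‖bbf K‖ ≤ Real.sqrt (γ 0) * (1 + K * M) := by
        intro K
        rw [hbbdef]
        refine (norm_sub_le _ _).trans ?_
        have h1 : ‖∑ j ∈ Finset.Icc 1 K, φ K j • X ((n:ℤ) - ((K:ℤ)+1) + j)‖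
            ≤ (K:ℝ) * (M * Real.sqrt (γ 0)) := by
          refine (norm_sum_le _ _).trans ?_
          have h2 : ∀ j ∈ Finset.Icc 1 K, ‖φ K j • X ((n:ℤ) - ((K:ℤ)+1) + j)‖
              ≤ M * Real.sqrt (γ 0) := by
            intro j hj
            simp only [Finset.mem_Icc] at hj
            rw [norm_smul, Real.norm_eq_abs, hγ0]
            exact mul_le_mul_of_nonneg_right (hMbd K j hj.1 hj.2) (Real.sqrt_nonneg _)
          refine (Finset.sum_le_sum h2).trans ?_
          rw [Finset.sum_const, Nat.card_Icc]
          simp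
        rw [hγ0]
        nlinarith [Real.sqrt_nonneg (γ 0), hM0]
      have hsumd : Summable (fun K => dist (fK K) (fK (K+1))) := by
        have hg : Summable (fun K : ℕ => (Real.sqrt (γ 0) * ρ) * ρ ^ K
            + (Real.sqrt (γ 0) * M * ρ) * ((K:ℝ) * ρ ^ K)) := by
          refine Summable.add (Summable.mul_left _ ?_) (Summable.mul_left _ ?_)
          · exact summable_geometric_of_lt_one hρ0.le hρ1
          · have := summable_pow_mul_geometric_of_norm_lt_one 1 (r := ρ)
              (by rw [Real.norm_eq_abs, abs_of_pos hρ0]; exact hρ1)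
            simpa using this
        refine Summable.of_norm_bounded_eventually_nat hg ?_
        filter_upwards [eventually_ge_atTop N, eventually_ge_atTop 1] with K hKN hK1
        rw [Real.norm_eq_abs, abs_of_nonneg dist_nonneg, dist_eq_norm, norm_sub_rev,
          hfd K hK1, norm_neg, norm_smul, Real.norm_eq_abs]
        calc |φ (K+1) (K+1)| * ‖bbf K‖
            ≤ ρ ^ (K+1) * (Real.sqrt (γ 0) * (1 + K * M)) :=
              mul_le_mul (hρn (K+1) (by omega)) (hbbnorm K) (norm_nonneg _)
                (pow_nonneg hρ0.le _)
          _ = (Real.sqrt (γ 0) * ρ) * ρ ^ K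
              + (Real.sqrt (γ 0) * M * ρ) * ((K:ℝ) * ρ ^ K) := by ring
      have hcauchy : CauchySeq fK := cauchySeq_of_summable_dist hsumd
      obtain ⟨u, hu⟩ := cauchySeq_tendsto_of_complete hcauchy
      have horthu : ∀ s : ℤ, s ≤ (n:ℤ) - 1 → ⟪u, X s⟫ = 0 := by
        intro s hs
        have h1 : Tendsto (fun K => ⟪fK K, X s⟫) atTop (𝓝 ⟪u, X s⟫) :=
          hu.inner tendsto_const_nhds
        have h2 : ∀ᶠ K : ℕ in atTop, ⟪fK K, X s⟫ = 0 := by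
          filter_upwards [eventually_ge_atTop (max 1 ((n:ℤ) - s).toNat)] with K hK
          have hK1 : 1 ≤ K := le_trans (le_max_left _ _) hK
          have hKs : (n:ℤ) - (K:ℕ) ≤ s := by
            have h3 : ((n:ℤ) - s).toNat ≤ K := le_trans (le_max_right _ _) hK
            have h4 : ((n:ℤ) - s) ≤ (((n:ℤ) - s).toNat : ℤ) := Int.self_le_toNat _
            have h5 : ((((n:ℤ) - s).toNat : ℤ)) ≤ (K:ℤ) := by exact_mod_cast h3
            omega
          have hmem : X s ∈ hSpan X (Set.Icc ((n:ℤ) - (K:ℕ)) ((n:ℤ) - 1)) :=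
            X_mem_hSpan X (by simp only [Set.mem_Icc]; omega)
          have h6 := projSpan_inner_eq_zero X (Set.Icc ((n:ℤ) - (K:ℕ)) ((n:ℤ) - 1))
            (X (n:ℤ)) (X s) hmem
          rw [hφ K hK1 (n:ℤ)] at h6
          simpa [hfKdef, hSdef] using h6
        exact tendsto_nhds_unique ((tendsto_congr' h2).mp h1) tendsto_const_nhds
      set T : H := ∑' i : ℕ, π (i + 1) • X ((n:ℤ) - (i + 1 : ℕ)) with hTdef
      have hTsum : Summable (fun i : ℕ => π (i + 1) • X ((n:ℤ) - (i + 1 : ℕ))) := by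
        refine Summable.of_norm_bounded (g := fun i => |π (i+1)| * Real.sqrt (γ 0)) ?_ ?_
        · exact (hπ.comp_injective (add_left_injective 1)).mul_right _
        · intro i
          rw [norm_smul, Real.norm_eq_abs, hγ0]
      have harE : arEps X π (n:ℤ) = X (n:ℤ) - T := rfl
      have hVclosed : IsClosed ((hSpan X (Set.Iic ((n:ℤ) - 1)) : Submodule ℝ H) : Set H) :=
        Submodule.isClosed_topologicalClosure _
      have hTmem : T ∈ hSpan X (Set.Iic ((n:ℤ) - 1)) := by
        refine hVclosed.mem_of_tendsto hTsum.hasSum.tendsto_sum_nat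
          (Filter.Eventually.of_forall fun m => ?_)
        refine Submodule.sum_mem _ fun i _ => Submodule.smul_mem _ _ ?_
        exact X_mem_hSpan X (by simp only [Set.mem_Iic]; push_cast; omega)
      have hStends : Tendsto S atTop (𝓝 (X (n:ℤ) - u)) := by
        have h1 : Tendsto (fun K => X (n:ℤ) - fK K) atTop (𝓝 (X (n:ℤ) - u)) :=
          tendsto_const_nhds.sub hu
        exact h1.congr fun K => by simp [hfKdef]
      have hSmem : X (n:ℤ) - u ∈ hSpan X (Set.Iic ((n:ℤ) - 1)) := by
        refine hVclosed.mem_of_tendsto hStends (Filter.Eventually.of_forall fun K => ?_)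
        rw [hSdef]
        refine Submodule.sum_mem _ fun m hm => Submodule.smul_mem _ _ ?_
        simp only [Finset.mem_Icc] at hm
        exact X_mem_hSpan X (by simp only [Set.mem_Iic]; omega)
      have hw : X (n:ℤ) - u = T := by
        set w : H := T - (X (n:ℤ) - u) with hwdef
        have hworth : w ∈ (hSpan X (Set.Iic ((n:ℤ) - 1)))ᗮ := by
          refine mem_hSpan_orthogonal X _ w fun s hs => ?_
          simp only [Set.mem_Iic] at hs
          have h1 : w = u - arEps X π (n:ℤ) := by rw [hwdef, harE]; abel
          rw [h1, inner_sub_right, real_inner_comm u (X s), horthu s hs,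
            real_inner_comm (arEps X π (n:ℤ)) (X s), heps_orth (n:ℤ) s hs, sub_zero]
        have hwmem : w ∈ hSpan X (Set.Iic ((n:ℤ) - 1)) := by
          rw [hwdef]; exact Submodule.sub_mem _ hTmem hSmem
        have h0 : ⟪w, w⟫ = 0 := Submodule.inner_right_of_mem_orthogonal hwmem hworth
        have hw0 : w = 0 := inner_self_eq_zero.mp h0
        rw [hwdef] at hw0
        exact (sub_eq_zero.mp hw0).symm
      have hStendT : Tendsto S atTop (𝓝 T) := hw ▸ hStends
      have hSY : ∀ K, n ≤ K → ⟪S K, Y⟫ = φ K n * ‖Y‖ ^ 2 := by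
        intro K hK
        rw [hSdef]
        rw [sum_inner, Finset.sum_eq_single n
          (fun j hj hjn => by
            rw [real_inner_smul_left, hYs ((n:ℤ) - (j:ℕ)) (by omega), mul_zero])
          (fun hn => absurd (by simp only [Finset.mem_Icc]; omega) hn)]
        rw [real_inner_smul_left, show ((n:ℤ) - (n:ℕ)) = 0 from by omega, hY0]
      have hTY : ⟪T, Y⟫ = π n * ‖Y‖ ^ 2 := by
        have hs2 : HasSum (fun i : ℕ => π (i + 1) * ⟪Y, X ((n:ℤ) - ((i:ℤ) + 1))⟫) ⟪Y, T⟫ := by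
          have h := (innerSL ℝ Y).hasSum hTsum.hasSum
          simp at h; exact h
        have hval : ⟪Y, T⟫ = π n * ‖Y‖ ^ 2 := by
          rw [← hs2.tsum_eq, tsum_eq_single (n-1) (fun i hi => by
            rw [real_inner_comm (X ((n:ℤ) - ((i:ℤ) + 1))) Y,
              hYs ((n:ℤ) - ((i:ℤ) + 1)) (by omega), mul_zero])]
          rw [show ((n:ℤ) - (((n - 1 : ℕ):ℤ) + 1)) = 0 from by omega,
            real_inner_comm (X (0:ℤ)) Y, hY0, show n - 1 + 1 = n from by omega]
        rw [real_inner_comm]; exact hval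
      have h1 : Tendsto (fun K => ⟪S K, Y⟫) atTop (𝓝 (π n * ‖Y‖ ^ 2)) := by
        rw [← hTY]; exact hStendT.inner tendsto_const_nhds
      have h2 : Tendsto (fun K => φ K n * ‖Y‖ ^ 2) atTop (𝓝 (π n * ‖Y‖ ^ 2)) := by
        refine Tendsto.congr' ?_ h1
        filter_upwards [eventually_ge_atTop n] with K hK
        exact hSY K hK
      have hY2 : (‖Y‖ ^ 2) ≠ 0 := by positivity
      have h3 := h2.mul_const ((‖Y‖ ^ 2)⁻¹)
      simp only [mul_assoc, mul_inv_cancel₀ hY2, mul_one] at h3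
      exact h3
    -- geometric bound on the AR coefficients
    have hπbound : ∀ n : ℕ, max N 1 ≤ n → |π n| ≤ C * ρ ^ n := by
      intro n hn
      have h1n : 1 ≤ n := le_trans (le_max_right _ _) hn
      have hNn : N ≤ n := le_trans (le_max_left _ _) hn
      refine le_of_tendsto ((hlim n h1n).abs) ?_
      filter_upwards [eventually_ge_atTop n] with K hK
      exact bound1 n hNn h1n K hK
    have hC0 : (0:ℝ) < C := lt_of_lt_of_le one_pos hC1
    have hev2 : ∀ᶠ m : ℕ in atTop, |π m| ^ (1/(m:ℝ)) ≤ C ^ (1/(m:ℝ)) * ρ := by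
      filter_upwards [eventually_ge_atTop (max N 1)] with m hm
      have h1m : 1 ≤ m := le_trans (le_max_right _ _) hm
      have hb : |π m| ≤ C * ρ ^ m := hπbound m hm
      have h2 : |π m| ^ (1/(m:ℝ)) ≤ (C * ρ ^ m) ^ (1/(m:ℝ)) :=
        Real.rpow_le_rpow (abs_nonneg _) hb (by positivity)
      refine h2.trans (le_of_eq ?_)
      rw [Real.mul_rpow hC0.le (pow_nonneg hρ0.le _)]
      congr 1
      rw [← Real.rpow_natCast ρ m, ← Real.rpow_mul hρ0.le]
      rw [show (m:ℝ) * (1/(m:ℝ)) = 1 from by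
        field_simp]
      exact Real.rpow_one ρ
    have htendg : Tendsto (fun m : ℕ => C ^ (1/(m:ℝ)) * ρ) atTop (𝓝 ρ) := by
      have h1 : Tendsto (fun m : ℕ => Real.log C * (1/(m:ℝ))) atTop (𝓝 0) := by
        simpa using tendsto_one_div_atTop_nhds_zero_nat.const_mul (Real.log C)
      have h2 : Tendsto (fun m : ℕ => Real.exp (Real.log C * (1/(m:ℝ)))) atTop (𝓝 1) := by
        have := (Real.continuous_exp.tendsto 0).comp h1
        simpa [Function.comp_def] using this
      have h3 : (fun m : ℕ => C ^ (1/(m:ℝ))) = fun m : ℕ => Real.exp (Real.log C * (1/(m:ℝ))) := by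
        funext m
        rw [Real.rpow_def_of_pos hC0]
      have h4 : Tendsto (fun m : ℕ => C ^ (1/(m:ℝ))) atTop (𝓝 1) := by rw [h3]; exact h2
      have h5 := h4.mul_const ρ
      simpa using h5
    calc Filter.limsup (fun n : ℕ => |π n| ^ (1 / (n : ℝ))) Filter.atTop
        ≤ Filter.limsup (fun m : ℕ => C ^ (1/(m:ℝ)) * ρ) Filter.atTop := by
          refine Filter.limsup_le_limsup hev2 ?_ ?_
          · refine Filter.isCoboundedUnder_le_of_eventually_le atTop (x := 0) ?_
            exact Filter.Eventually.of_forall fun m => Real.rpow_nonneg (abs_nonneg _) _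
          · exact htendg.isBoundedUnder_le
      _ = ρ := htendg.limsup_eq
  -- boundedness of the PACF sequence, and conclusion
  have hbddφ : Filter.IsBoundedUnder (· ≤ ·) atTop (fun n : ℕ => |φ n n| ^ (1/(n:ℝ))) := by
    refine ⟨max 1 M, ?_⟩
    refine Filter.eventually_map.mpr (Filter.Eventually.of_forall fun n => ?_)
    rcases Nat.eq_zero_or_pos n with h0 | h1
    · subst h0
      simp only [Nat.cast_zero, div_zero, Real.rpow_zero]
      exact le_max_left _ _
    · have hb : |φ n n| ≤ M := hMbd n n h1 le_rfl
      rcases le_or_gt (|φ n n|) 1 with h | h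
      · exact (Real.rpow_le_one (abs_nonneg _) h (by positivity)).trans (le_max_left _ _)
      · have h2 : |φ n n| ^ (1/(n:ℝ)) ≤ |φ n n| ^ (1:ℝ) := by
          refine Real.rpow_le_rpow_of_exponent_le h.le ?_
          rw [div_le_one (by exact_mod_cast h1)]
          exact_mod_cast h1
        rw [Real.rpow_one] at h2
        exact h2.trans (hb.trans (le_max_right _ _))
  by_contra hcon
  push_neg at hcon
  have hL1 : Filter.limsup (fun n : ℕ => |φ n n| ^ (1/(n:ℝ))) atTop
      < min (Filter.limsup (fun n : ℕ => |π n| ^ (1/(n:ℝ))) atTop) 1 := lt_min hcon hlt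
  obtain ⟨ρ, hρL, hρm⟩ := exists_between hL1
  have hρ1 : ρ < 1 := lt_of_lt_of_le hρm (min_le_right _ _)
  have hevρ : ∀ᶠ n in atTop, |φ n n| ^ (1/(n:ℝ)) < ρ :=
    eventually_lt_of_limsup_lt hρL hbddφ
  have hρ0 : 0 < ρ := by
    obtain ⟨n, hn⟩ := hevρ.exists
    exact lt_of_le_of_lt (Real.rpow_nonneg (abs_nonneg _) _) hn
  have hkey := key ρ hρ0 hρ1 hevρ
  have h2 : ρ < Filter.limsup (fun n : ℕ => |π n| ^ (1/(n:ℝ))) atTop :=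
    lt_of_lt_of_le hρm (min_le_left _ _)
  linarith
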